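/- arXiv:1006.3515 — 3 statements merged into one kernel-verified Lean document; each statement's English description precedes it below -/
import Mathlib

section
/- Every free group F is residually a finite p-group for every prime p: for any nontrivial element u ∈ F and any prime p, there exists a homomorphism φ from F onto a finite p-group with φ(u) ≠ 1. -/
/-!
Fix a word `t₀ ⋯ t_{n-1}` and send each letter `t` to `1 + N_t`, where the `(n+1) × (n+1)` matrix
`N_t` has a `1` at `(i, i + 1)` whenever `tᵢ = t`. If consecutive letters of the word differ, then
`N_t ^ 2 = 0`, so `t⁻¹` goes to `1 - N_t`; the image of the word is then a product of factors
`1 ± N_{tᵢ}` whose `(0, n)` entry only sees the path `0 → 1 → ⋯ → n`, hence equals `±1`, and the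
word is not killed. A reduced word is brought into this shape by the doubling `a ↦ a₀ a₁`
(`a⁻¹ ↦ a₁⁻¹ a₀⁻¹`), which makes consecutive letters distinct. The image lies in the upper
unitriangular group over `ZMod p`, a finite `p`-group since `(1 + N) ^ p ^ n = 1 + N ^ p ^ n = 1`.
-/

namespace Matrix

section Ring

variable {R : Type*} [Ring R] {n : ℕ}

variable (R n) in
def upperFrom (k : ℕ) : AddSubgroup (Matrix (Fin n) (Fin n) R) where
  carrier := {M | ∀ i j : Fin n, (j : ℕ) < i + k → M i j = 0}
  zero_mem' _ _ _ := rfl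
  add_mem' hA hB i j hij := by simp [hA i j hij, hB i j hij]
  neg_mem' hA i j hij := by simp [hA i j hij]

theorem upperFrom_antitone : Antitone (upperFrom R n) :=
  fun _ _ hkl _ hM i j hij => hM i j (by omega)

theorem mul_mem_upperFrom {A B : Matrix (Fin n) (Fin n) R} {k l : ℕ} (hA : A ∈ upperFrom R n k)
    (hB : B ∈ upperFrom R n l) : A * B ∈ upperFrom R n (k + l) := by
  intro i j hij
  rw [mul_apply]
  refine Finset.sum_eq_zero fun c _ => ?_
  by_cases hc : (c : ℕ) < i + k
  · rw [hA i c hc, zero_mul]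
  · rw [hB c j (by omega), mul_zero]

theorem pow_mem_upperFrom {A : Matrix (Fin n) (Fin n) R} (hA : A ∈ upperFrom R n 1) (m : ℕ) :
    A ^ m ∈ upperFrom R n m := by
  induction m with
  | zero => exact fun i j hij => one_apply_ne (by omega)
  | succ m ih => exact pow_succ A m ▸ mul_mem_upperFrom ih hA

theorem pow_eq_zero_of_mem_upperFrom {N : Matrix (Fin n) (Fin n) R} (hN : N ∈ upperFrom R n 1)
    {m : ℕ} (hm : n ≤ m) : N ^ m = 0 :=
  ext fun i j => pow_mem_upperFrom hN m i j (by omega)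

theorem isUnit_one_add_of_mem_upperFrom {N : Matrix (Fin n) (Fin n) R}
    (hN : N ∈ upperFrom R n 1) : IsUnit (1 + N) :=
  IsNilpotent.isUnit_one_add ⟨n, pow_eq_zero_of_mem_upperFrom hN le_rfl⟩

variable (R n) in
def unitriangular : Subgroup (Matrix (Fin n) (Fin n) R)ˣ where
  carrier := {g | (g : Matrix (Fin n) (Fin n) R) - 1 ∈ upperFrom R n 1}
  one_mem' := by simp [zero_mem]
  mul_mem' {g h} hg hh := by
    have : (g * h : Matrix (Fin n) (Fin n) R) - 1 = (g - 1) + (h - 1) + (g - 1) * (h - 1) := by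
      noncomm_ring
    rw [Set.mem_ofPred_eq, Units.val_mul, this]
    exact add_mem (add_mem hg hh) (upperFrom_antitone (by omega) (mul_mem_upperFrom hg hh))
  inv_mem' {g} hg := by
    set N := (g : Matrix (Fin n) (Fin n) R) - 1
    have hinv : (↑g⁻¹ : Matrix (Fin n) (Fin n) R) = ∑ i ∈ Finset.range (n + 1), (-N) ^ i := by
      refine Units.inv_eq_of_mul_eq_one_right ?_
      have := mul_neg_geom_sum (-N) (n + 1)
      rwa [neg_pow, pow_eq_zero_of_mem_upperFrom hg (by omega), mul_zero, sub_zero, sub_neg_eq_add,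
        add_sub_cancel] at this
    rw [Set.mem_ofPred_eq, hinv, Finset.sum_range_succ', pow_zero, add_sub_cancel_right]
    exact AddSubgroup.sum_mem _ fun i _ =>
      upperFrom_antitone (by omega) (pow_mem_upperFrom (neg_mem hg) (i + 1))

theorem isPGroup_unitriangular (p : ℕ) [Fact p.Prime] [CharP R p] [NeZero n] :
    IsPGroup p (unitriangular R n) := by
  intro g
  refine ⟨n, Subtype.ext <| Units.ext ?_⟩
  obtain ⟨N, hN, hg⟩ : ∃ N ∈ upperFrom R n 1,
      ((g : (Matrix (Fin n) (Fin n) R)ˣ) : Matrix (Fin n) (Fin n) R) = 1 + N :=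
    ⟨_, g.2, (add_sub_cancel _ _).symm⟩
  have hp : n ≤ p ^ n := (Nat.lt_pow_self (Fact.out : p.Prime).one_lt).le
  simp only [SubgroupClass.coe_pow, Units.val_pow_eq_pow_val, hg,
    add_pow_char_pow_of_commute p n (Commute.one_left N), one_pow,
    pow_eq_zero_of_mem_upperFrom hN hp, add_zero, OneMemClass.coe_one, Units.val_one]

variable {T : Type*} [DecidableEq T]

variable (R) in
def pathMatrix (n : ℕ) (w : List T) (t : T) : Matrix (Fin (n + 1)) (Fin (n + 1)) R :=
  of fun i j => if w[(i : ℕ)]? = some t ∧ (j : ℕ) = i + 1 then 1 else 0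

theorem pathMatrix_mem_upperFrom (w : List T) (t : T) :
    pathMatrix R n w t ∈ upperFrom R (n + 1) 1 :=
  fun _ _ hij => if_neg fun h => by omega

theorem mul_pathMatrix_apply_zero (A : Matrix (Fin (n + 1)) (Fin (n + 1)) R) (w : List T) (t : T)
    (i : Fin (n + 1)) : (A * pathMatrix R n w t) i 0 = 0 := by
  simp [mul_apply, pathMatrix]

theorem mul_pathMatrix_apply_succ (A : Matrix (Fin (n + 1)) (Fin (n + 1)) R) (w : List T) (t : T)
    (i : Fin (n + 1)) (k : Fin n) :
    (A * pathMatrix R n w t) i k.succ = if w[(k : ℕ)]? = some t then A i k.castSucc else 0 := by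
  rw [mul_apply, Finset.sum_eq_single k.castSucc]
  · split_ifs <;> simp_all [pathMatrix]
  · intro c _ hc
    have : (k : ℕ) ≠ c := fun h => hc (Fin.ext (by simp [h]))
    simp [pathMatrix, this]
  · simp

theorem pathMatrix_mul_self {w : List T} (hw : w.IsChain (· ≠ ·)) (t : T) :
    pathMatrix R n w t * pathMatrix R n w t = 0 := by
  ext i j
  induction j using Fin.cases with
  | zero => exact mul_pathMatrix_apply_zero _ _ _ _
  | succ k =>
    rw [mul_pathMatrix_apply_succ]
    simp only [pathMatrix, of_apply, Fin.val_castSucc, zero_apply]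
    split_ifs with hk hi
    · exfalso
      obtain ⟨hi, hki⟩ := hi
      rw [hki] at hk
      obtain ⟨hlt, rfl⟩ := List.getElem?_eq_some_iff.mp hi
      obtain ⟨hlt', hk⟩ := List.getElem?_eq_some_iff.mp hk
      exact List.isChain_iff_getElem.mp hw i hlt' hk.symm
    all_goals rfl

variable (R) in
noncomputable def pathRep (n : ℕ) (w : List T) : FreeGroup T →* unitriangular R (n + 1) :=
  FreeGroup.lift fun t =>
    ⟨(isUnit_one_add_of_mem_upperFrom (pathMatrix_mem_upperFrom w t)).unit, by
      simpa [unitriangular] using pathMatrix_mem_upperFrom w t⟩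

theorem coe_pathRep_cond {w : List T} (hw : w.IsChain (· ≠ ·)) (t : T) (b : Bool) :
    ((pathRep R n w (cond b (.of t) (.of t)⁻¹) :
      (Matrix (Fin (n + 1)) (Fin (n + 1)) R)ˣ) : Matrix (Fin (n + 1)) (Fin (n + 1)) R) =
      1 + (if b then 1 else -1 : R) • pathMatrix R n w t := by
  cases b
  · simp only [cond_false, map_inv, Subgroup.coe_inv, Bool.false_eq_true, ite_false, neg_one_smul,
      ← sub_eq_add_neg]
    refine Units.inv_eq_of_mul_eq_one_right ?_
    simp only [pathRep, FreeGroup.lift_apply_of, IsUnit.unit_spec]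
    rw [show ∀ N : Matrix (Fin (n + 1)) (Fin (n + 1)) R, (1 + N) * (1 - N) = 1 - N * N from
      fun N => by noncomm_ring, pathMatrix_mul_self hw, sub_zero]
  · simp [pathRep]

theorem coe_pathRep_mk {D : List (T × Bool)} (hw : (D.map Prod.fst).IsChain (· ≠ ·)) :
    ((pathRep R D.length (D.map Prod.fst) (FreeGroup.mk D) :
      (Matrix (Fin (D.length + 1)) (Fin (D.length + 1)) R)ˣ) :
        Matrix (Fin (D.length + 1)) (Fin (D.length + 1)) R) =
      (D.map fun y =>
        1 + (if y.2 then 1 else -1 : R) • pathMatrix R D.length (D.map Prod.fst) y.1).prod := by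
  rw [← FreeGroup.lift_of_apply (FreeGroup.mk D), FreeGroup.lift_mk]
  refine (map_list_prod ((Units.coeHom _).comp
    ((unitriangular R _).subtype.comp (pathRep R D.length (D.map Prod.fst)))) _).trans ?_
  rw [List.map_map]
  exact congrArg List.prod (List.map_congr_left fun y _ => coe_pathRep_cond hw y.1 y.2)

end Ring

section CommRing

variable {R S T : Type*} [CommRing R] [DecidableEq T]

theorem pathMatrix_prod_take_apply (D : List (T × S)) (c : S → R) {m : ℕ} (hm : m ≤ D.length)
    (j : Fin (D.length + 1)) (hj : m ≤ j) :
    ((D.take m).map fun y => 1 + c y.2 • pathMatrix R D.length (D.map Prod.fst) y.1).prod 0 j =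
      if (j : ℕ) = m then ((D.take m).map fun y => c y.2).prod else 0 := by
  induction m generalizing j with
  | zero =>
    rw [List.take_zero, List.map_nil, List.prod_nil, List.map_nil, List.prod_nil, one_apply]
    simp only [Fin.ext_iff, Fin.val_zero, eq_comm]
  | succ m ih =>
    obtain ⟨k, rfl⟩ := Fin.exists_succ_eq.mpr (fun h : j = 0 => by simp [h] at hj)
    have hk : m ≤ k := by simpa using hj
    rw [List.take_succ_eq_append_getElem (by omega), List.map_append, List.map_append,
      List.prod_append, List.prod_append, List.map_singleton, List.map_singleton,
      List.prod_singleton, List.prod_singleton, Matrix.mul_add, mul_one, Matrix.mul_smul,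
      add_apply, smul_apply, mul_pathMatrix_apply_succ, ih (by omega) _ (by simp; omega),
      ih (by omega) k.castSucc hk]
    rcases hk.eq_or_lt with rfl | hlt
    · simp [mul_comm]
    · simp [hlt.ne', show (k : ℕ) + 1 ≠ m by omega]

theorem pathMatrix_prod_apply_last (D : List (T × S)) (c : S → R) :
    (D.map fun y => 1 + c y.2 • pathMatrix R D.length (D.map Prod.fst) y.1).prod 0
      (Fin.last D.length) = (D.map fun y => c y.2).prod := by
  simpa using pathMatrix_prod_take_apply D c le_rfl (Fin.last D.length) le_rfl

theorem pathRep_mk_ne_one [Nontrivial R] {D : List (T × Bool)} (hD : D ≠ [])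
    (hw : (D.map Prod.fst).IsChain (· ≠ ·)) :
    pathRep R D.length (D.map Prod.fst) (FreeGroup.mk D) ≠ 1 := by
  intro h
  have hcorner := pathMatrix_prod_apply_last D fun b : Bool => if b then (1 : R) else -1
  rw [← coe_pathRep_mk hw, h] at hcorner
  have hsign : IsUnit (D.map fun y => if y.2 then (1 : R) else -1).prod :=
    List.prod_isUnit <| List.forall_mem_map.mpr fun y _ => by split_ifs <;> simp
  refine hsign.ne_zero (hcorner.symm.trans (one_apply_ne ?_))
  simpa [Fin.ext_iff, eq_comm] using hD

end CommRing

end Matrix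

namespace FreeGroup

variable {α : Type*}

def doubleLetter (x : α × Bool) : List ((α × Bool) × Bool) := [((x.1, !x.2), x.2), (x, x.2)]

def doubling : FreeGroup α →* FreeGroup (α × Bool) := lift fun a => of (a, false) * of (a, true)

theorem doubling_mk (L : List (α × Bool)) : doubling (mk L) = mk (L.flatMap doubleLetter) := by
  induction L with
  | nil => rfl
  | cons x L ih =>
    rw [← List.singleton_append, ← mul_mk, _root_.map_mul, ih, List.flatMap_append,
      List.flatMap_singleton, ← mul_mk]
    obtain ⟨a, _ | _⟩ := x <;> simp [doubling, doubleLetter, of, inv_mk, mul_mk, invRev]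

theorem IsReduced.isChain_flatMap_doubleLetter {L : List (α × Bool)} (hL : IsReduced L) :
    ((L.flatMap doubleLetter).map Prod.fst).IsChain (· ≠ ·) := by
  induction L with
  | nil => exact List.isChain_nil
  | cons x L ih =>
    rw [List.flatMap_cons, List.map_append, List.isChain_append]
    refine ⟨by simp [doubleLetter, Prod.ext_iff], ih hL.tail, ?_⟩
    cases L with
    | nil => simp
    | cons y L =>
      have hxy := (isReduced_cons_cons.mp hL).1
      simp only [doubleLetter, List.flatMap_cons, List.map_cons, List.map_nil,
        List.getLast?_cons_cons, List.getLast?_singleton, Option.mem_def, Option.some.injEq,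
        List.cons_append, List.head?_cons, forall_eq']
      rintro rfl
      simp at hxy

theorem exists_unitriangular_ne_one (R : Type*) [CommRing R] [Nontrivial R] {u : FreeGroup α}
    (hu : u ≠ 1) : ∃ (n : ℕ) (ψ : FreeGroup α →* Matrix.unitriangular R (n + 1)), ψ u ≠ 1 := by
  classical
  set D := u.toWord.flatMap doubleLetter
  have hD : D ≠ [] := by
    obtain ⟨x, hx⟩ := List.exists_mem_of_ne_nil _ (mt toWord_eq_nil_iff.mp hu)
    exact List.ne_nil_of_mem (a := (x, x.2)) (List.mem_flatMap.mpr ⟨x, hx, by simp [doubleLetter]⟩)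
  refine ⟨D.length, (Matrix.pathRep R D.length (D.map Prod.fst)).comp doubling, ?_⟩
  rw [MonoidHom.comp_apply, ← mk_toWord (x := u), doubling_mk]
  exact Matrix.pathRep_mk_ne_one hD isReduced_toWord.isChain_flatMap_doubleLetter

end FreeGroup

theorem stmt_3 (α : Type) (u : FreeGroup α) (hu : u ≠ 1) (p : ℕ) (hp : p.Prime) :
    ∃ (P : Type) (_ : Group P) (_ : Fintype P) (_ : IsPGroup p P)
      (φ : FreeGroup α →* P),
      Function.Surjective φ ∧ φ u ≠ 1 := by
  have := Fact.mk hp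
  obtain ⟨n, ψ, hψ⟩ := FreeGroup.exists_unitriangular_ne_one (ZMod p) hu
  refine ⟨ψ.range, inferInstance, Fintype.ofFinite _,
    (Matrix.isPGroup_unitriangular p).to_subgroup _, ψ.rangeRestrict, ψ.rangeRestrict_surjective,
    fun h => hψ ?_⟩
  rw [← ψ.coe_rangeRestrict, h, OneMemClass.coe_one]
end

section
/- Let F be a free group and p a prime. A cyclic subgroup ⟨u⟩ of F is p'-isolated (meaning: for every g ∈ F and every integer t coprime to p, g^t ∈ ⟨u⟩ implies g ∈ ⟨u⟩) whenever u = v^{p^m} for v not a proper power. Conversely, if u = v^{p^m t} with p ∤ t and t > 1 and v ≠ 1 not a proper power, then ⟨u⟩ is not p'-isolated. -/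
/-- `v` is not a proper power. -/
def NotProperPower {G : Type*} [Group G] (v : G) : Prop :=
  ∀ (w : G) (k : ℤ), v = w ^ k → k = 1 ∨ k = -1

/-- A subgroup `H` is `p'`-isolated. -/
def PPrimeIsolated {G : Type*} [Group G] (p : ℕ) (H : Subgroup G) : Prop :=
  ∀ (g : G) (t : ℤ), Int.gcd t p = 1 → g ^ t ∈ H → g ∈ H

/-!
If `g ^ t = v ^ N` with `t ≠ 0` in a free group, then `g` and `v` lie in a common cyclic subgroup:
`⟨g, v⟩` is free by Nielsen–Schreier, and it has rank at most one, because a homomorphism from it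
to `ℤ` is determined by its value at `v`, whereas a free group of rank at least two has a nonzero
homomorphism to `ℤ` vanishing at any prescribed element. As `v` is not a proper power, `g = v ^ a`,
and `a * t = p ^ m * s` with `t` prime to `p` gives `p ^ m ∣ a`, i.e. `g ∈ ⟨v ^ p ^ m⟩`.
Conversely, if `u = v ^ (p ^ m * t)` then `v ^ p ^ m` is a `t`-th root of `u` outside `⟨u⟩`.
-/

open Function

lemma NotProperPower.ne_one {G : Type*} [Group G] {v : G} (hv : NotProperPower v) : v ≠ 1 := by
  rintro rfl
  simpa using hv 1 0 (by simp)

lemma IsMulTorsionFree.zpow_right_injective {G : Type*} [Group G] [IsMulTorsionFree G] {v : G}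
    (hv : v ≠ 1) : Injective (v ^ · : ℤ → G) :=
  injective_zpow_iff_not_isOfFinOrder.2 (not_isOfFinOrder_of_isMulTorsionFree hv)

lemma AddMonoidHom.not_injective_int_prod (f : ℤ × ℤ →+ ℤ) : ¬ Injective f := fun hf => by
  simpa using LinearMap.finrank_le_finrank_of_injective (f := f.toIntLinearMap) hf

instance FreeGroup.isCyclic_of_subsingleton {β : Type*} [Subsingleton β] :
    IsCyclic (FreeGroup β) := by
  obtain ⟨c, hc⟩ : ∃ c : FreeGroup β, Set.range FreeGroup.of ⊆ {c} := by
    rcases isEmpty_or_nonempty β with h | ⟨⟨b⟩⟩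
    · exact ⟨1, by simp [Set.range_eq_empty]⟩
    · exact ⟨.of b, Set.range_subset_singleton.2
        (funext fun b' => congrArg _ (Subsingleton.elim b' b))⟩
  refine isCyclic_iff_exists_zpowers_eq_top.2 ⟨c, top_unique ?_⟩
  rw [← FreeGroup.closure_range_of, Subgroup.zpowers_eq_closure]
  exact Subgroup.closure_mono hc

section
variable {G : Type*} [Group G]

lemma MonoidHom.eq_one_of_apply_eq_one_of_zpow_eq {M : Type*} [CommGroup M] [IsMulTorsionFree M]
    {x y : G} {t N : ℤ} (hgen : Subgroup.closure {x, y} = ⊤) (ht : t ≠ 0) (hrel : x ^ t = y ^ N)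
    {φ : G →* M} (hφ : φ y = 1) : φ = 1 := by
  have hx : φ x = 1 := by
    rw [← IsMulTorsionFree.zpow_eq_one_iff_left ht, ← map_zpow, hrel, map_zpow, hφ, one_zpow]
  refine MonoidHom.eq_of_eqOn_dense hgen ?_
  rintro z (rfl | rfl) <;> simpa

namespace IsFreeGroup
variable [IsFreeGroup G]

lemma exists_ne_one_apply_eq_one [Nontrivial (Generators G)] (y : G) :
    ∃ φ : G →* Multiplicative ℤ, φ ≠ 1 ∧ φ y = 1 := by
  classical
  -- Characters supported on two distinct generators form a copy of `ℤ × ℤ`, on which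
  -- evaluation at `y` is additive with values in `ℤ`, hence has a nonzero kernel.
  obtain ⟨b₁, b₂, hb⟩ := exists_pair_ne (Generators G)
  let χ : ℤ × ℤ → G →* Multiplicative ℤ := fun c =>
    lift fun b => .ofAdd (if b = b₁ then c.1 else if b = b₂ then c.2 else 0)
  have hχ₁ (c : ℤ × ℤ) : χ c (of b₁) = .ofAdd c.1 := by simp [χ, lift_of]
  have hχ₂ (c : ℤ × ℤ) : χ c (of b₂) = .ofAdd c.2 := by simp [χ, lift_of, hb.symm]
  have hχ_add (c c' : ℤ × ℤ) : χ (c + c') = χ c * χ c' := by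
    refine ext_hom fun b => ?_
    simp only [χ, lift_of, MonoidHom.mul_apply]
    split_ifs <;> simp [ofAdd_add]
  let f : ℤ × ℤ →+ ℤ := AddMonoidHom.mk' (fun c => (χ c y).toAdd) fun c c' => by simp [hχ_add]
  obtain ⟨c, hfc, hc⟩ : ∃ c, f c = 0 ∧ c ≠ 0 := by
    simpa [injective_iff_map_eq_zero] using f.not_injective_int_prod
  refine ⟨χ c, fun h => hc (Prod.ext ?_ ?_), by simpa [f] using hfc⟩
  · simpa [h] using (hχ₁ c).symm
  · simpa [h] using (hχ₂ c).symm

lemma subsingleton_generators_of_zpow_eq {x y : G} {t N : ℤ}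
    (hgen : Subgroup.closure {x, y} = ⊤) (ht : t ≠ 0) (hrel : x ^ t = y ^ N) :
    Subsingleton (Generators G) := by
  by_contra h
  rw [not_subsingleton_iff_nontrivial] at h
  obtain ⟨φ, hφ, hφy⟩ := exists_ne_one_apply_eq_one y
  exact hφ (MonoidHom.eq_one_of_apply_eq_one_of_zpow_eq hgen ht hrel hφy)

lemma isCyclic_of_zpow_eq {x y : G} {t N : ℤ}
    (hgen : Subgroup.closure {x, y} = ⊤) (ht : t ≠ 0) (hrel : x ^ t = y ^ N) : IsCyclic G :=
  have := subsingleton_generators_of_zpow_eq hgen ht hrel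
  isCyclic_of_surjective (toFreeGroup G).symm (toFreeGroup G).symm.surjective

lemma exists_zpow_eq_and_zpow_eq {x y : G} {t N : ℤ} (ht : t ≠ 0) (hrel : x ^ t = y ^ N) :
    ∃ (c : G) (i j : ℤ), x = c ^ i ∧ y = c ^ j := by
  set H := Subgroup.closure {x, y}
  let x' : H := ⟨x, Subgroup.subset_closure (by simp)⟩
  let y' : H := ⟨y, Subgroup.subset_closure (by simp)⟩
  have hgen : Subgroup.closure {x', y'} = ⊤ := by
    convert Subgroup.closure_closure_coe_preimage (k := {x, y})
    ext ⟨z, hz⟩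
    simp [x', y', Subtype.ext_iff]
  have := isCyclic_of_zpow_eq hgen ht (Subtype.ext (by simpa using hrel) : x' ^ t = y' ^ N)
  obtain ⟨c, hc⟩ := IsCyclic.exists_generator (α := H)
  obtain ⟨i, hi⟩ := Subgroup.mem_zpowers_iff.1 (hc x')
  obtain ⟨j, hj⟩ := Subgroup.mem_zpowers_iff.1 (hc y')
  exact ⟨c, i, j, by simpa using congrArg Subtype.val hi.symm,
    by simpa using congrArg Subtype.val hj.symm⟩

end IsFreeGroup

lemma NotProperPower.mem_zpowers_of_zpow_eq [IsFreeGroup G] {v g : G} (hv : NotProperPower v)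
    {t N : ℤ} (ht : t ≠ 0) (hrel : g ^ t = v ^ N) : g ∈ Subgroup.zpowers v := by
  obtain ⟨c, i, j, rfl, hcv⟩ := IsFreeGroup.exists_zpow_eq_and_zpow_eq ht hrel
  rcases hv c j hcv with rfl | rfl
  · exact ⟨i, by simp [hcv]⟩
  · exact ⟨-i, by simp [hcv]⟩

end

theorem pPrimeIsolated_zpowers_pow {α : Type*} {p : ℕ} (hp : p ≠ 1) {v : FreeGroup α}
    (hv : NotProperPower v) (m : ℕ) : PPrimeIsolated p (Subgroup.zpowers (v ^ p ^ m)) := by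
  intro g t hcop hg
  have ht : t ≠ 0 := by
    rintro rfl
    exact hp (by simpa using hcop)
  obtain ⟨s, hs⟩ := Subgroup.mem_zpowers_iff.1 hg
  have hrel : g ^ t = v ^ ((p : ℤ) ^ m * s) := by rw [← hs, zpow_mul]; norm_cast
  obtain ⟨a, rfl⟩ := Subgroup.mem_zpowers_iff.1 (hv.mem_zpowers_of_zpow_eq ht hrel)
  have hat : a * t = p ^ m * s :=
    IsMulTorsionFree.zpow_right_injective hv.ne_one (by simpa [zpow_mul] using hrel)
  have hcop' : IsCoprime ((p : ℤ) ^ m) t := (Int.isCoprime_iff_gcd_eq_one.2 hcop).symm.pow_left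
  obtain ⟨k, rfl⟩ := hcop'.dvd_of_dvd_mul_right ⟨s, hat⟩
  exact Subgroup.mem_zpowers_iff.2 ⟨k, by rw [zpow_mul]; norm_cast⟩

theorem not_pPrimeIsolated_zpowers_pow_mul {G : Type*} [Group G] [IsMulTorsionFree G] {p : ℕ}
    {v : G} (hv : v ≠ 1) {n t : ℕ} (hn : n ≠ 0) (hcop : Nat.Coprime t p) (ht : 1 < t) :
    ¬ PPrimeIsolated p (Subgroup.zpowers (v ^ (n * t))) := fun hiso => by
  have hmem : (v ^ n) ^ (t : ℤ) ∈ Subgroup.zpowers (v ^ (n * t)) := ⟨1, by simp [pow_mul]⟩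
  obtain ⟨k, hk⟩ := Subgroup.mem_zpowers_iff.1 (hiso _ t (by simpa using hcop) hmem)
  have hnk : (n : ℤ) * (t * k) = n * 1 :=
    IsMulTorsionFree.zpow_right_injective hv (by simpa [← mul_assoc, zpow_mul, pow_mul] using hk)
  have htk := mul_left_cancel₀ (by exact_mod_cast hn) hnk
  have ht_eq_one : (t : ℤ) = 1 := Int.eq_one_of_mul_eq_one_right (by positivity) htk
  omega

theorem stmt_5 (α : Type) (p : ℕ) (hp : p.Prime) :
    (∀ (u v : FreeGroup α) (m : ℕ), NotProperPower v → u = v ^ (p ^ m) →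
      PPrimeIsolated p (Subgroup.zpowers u)) ∧
    (∀ (u v : FreeGroup α) (m : ℕ) (t : ℕ), ¬ p ∣ t → 1 < t → v ≠ 1 →
      NotProperPower v → u = v ^ (p ^ m * t) →
      ¬ PPrimeIsolated p (Subgroup.zpowers u)) := by
  refine ⟨fun u v m hv hu => hu ▸ pPrimeIsolated_zpowers_pow hp.ne_one hv m,
    fun u v m t hpt ht hv _ hu => hu ▸ ?_⟩
  exact not_pPrimeIsolated_zpowers_pow_mul hv (pow_ne_zero m hp.ne_zero)
    (Nat.coprime_comm.1 (hp.coprime_iff_not_dvd.2 hpt)) ht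
end

section
/- Let F be a free group and u₁, u₂ ∈ F nontrivial elements. Then u₁ and u₂ lie in conjugate cyclic subgroups (i.e., there exist g, w ∈ F with u₁ ∈ ⟨w⟩ and u₂ ∈ g⟨w⟩g⁻¹) if and only if some nonzero power of u₁ is conjugate in F to some nonzero power of u₂. -/
/-!
The centralizer of an element `z ≠ 1` of a free group is cyclic: by Nielsen–Schreier it is free,
and `z` is a nontrivial central element of it, whereas a free group on at least two generators has
trivial centre. So if `g * u₁ ^ a * g⁻¹ = u₂ ^ b ≠ 1`, then `g * u₁ * g⁻¹` and `u₂` both lie in the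
cyclic centralizer of `u₂ ^ b`; conversely, powers of elements of conjugate cyclic subgroups meet.
-/

namespace FreeGroup

variable {α : Type*}

theorem center_eq_bot [Nontrivial α] : Subgroup.center (FreeGroup α) = ⊥ := by
  classical
  refine (Subgroup.eq_bot_iff_forall _).2 fun c hc => ?_
  by_contra hc₁
  have hL : c.toWord ≠ [] := mt toWord_eq_nil_iff.1 hc₁
  -- A letter on a generator other than the last one of `c`, with the sign of the first letter of
  -- `c`, stays uncancelled on either side of `c`; the two products then end in different letters.
  obtain ⟨j, hj⟩ := exists_ne (c.toWord.getLast hL).1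
  set a : α × Bool := (j, (c.toWord.head hL).2)
  have hleft : (mk [a] * c).toWord = a :: c.toWord := by
    rw [toWord_mul, toWord_mk, reduce_singleton, List.singleton_append]
    refine IsReduced.reduce_eq (List.isChain_cons.2 ⟨?_, isReduced_toWord⟩)
    rintro y hy -
    rw [List.head?_eq_some_head hL, Option.mem_some_iff] at hy
    exact hy ▸ rfl
  have hright : (c * mk [a]).toWord = c.toWord ++ [a] := by
    rw [toWord_mul, toWord_mk, reduce_singleton]
    refine IsReduced.reduce_eq (isReduced_toWord.append (List.isChain_singleton a) ?_)
    intro x hx y hy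
    rw [List.getLast?_eq_some_getLast hL, Option.mem_some_iff] at hx
    rw [List.head?_cons, Option.mem_some_iff] at hy
    subst hx hy
    exact fun h => absurd h.symm hj
  have hlast := congrArg List.getLast?
    (hleft.symm.trans ((Subgroup.mem_center_iff.1 hc (mk [a])) ▸ hright))
  rw [List.getLast?_cons, List.getLast?_eq_some_getLast hL, List.getLast?_concat] at hlast
  exact hj (congrArg Prod.fst (Option.some_injective _ hlast)).symm

instance isCyclic_of_subsingleton_s7 [Subsingleton α] : IsCyclic (FreeGroup α) := by
  cases isEmpty_or_nonempty α
  · infer_instance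
  · have : Unique α := uniqueOfSubsingleton (Classical.arbitrary α)
    infer_instance

end FreeGroup

namespace IsFreeGroup

variable {G : Type*} [Group G] [IsFreeGroup G]

theorem isCyclic_of_mem_center {z : G} (hz : z ≠ 1) (hcen : z ∈ Subgroup.center G) :
    IsCyclic G := by
  let e := toFreeGroup G
  have : Subsingleton (Generators G) := by
    by_contra hne
    rw [not_subsingleton_iff_nontrivial] at hne
    have hez : e z ∈ Subgroup.center (FreeGroup (Generators G)) :=
      Subgroup.mem_center_iff.2 fun g => by
        simpa using congrArg e (Subgroup.mem_center_iff.1 hcen (e.symm g))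
    rw [FreeGroup.center_eq_bot, Subgroup.mem_bot, map_eq_one_iff _ e.injective] at hez
    exact hz hez
  exact isCyclic_of_surjective e.symm.toMonoidHom e.symm.surjective

theorem isCyclic_centralizer {z : G} (hz : z ≠ 1) :
    IsCyclic (Subgroup.centralizer {z}) :=
  isCyclic_of_mem_center (z := ⟨z, Subgroup.mem_centralizer_singleton_iff.2 rfl⟩)
    (Subtype.coe_ne_coe.1 hz)
    (Subgroup.mem_center_iff.2 fun x =>
      Subtype.ext (Subgroup.mem_centralizer_singleton_iff.1 x.2))

theorem exists_zpowers_of_commute {z : G} (hz : z ≠ 1) :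
    ∃ p : G, ∀ x, Commute z x → x ∈ Subgroup.zpowers p := by
  obtain ⟨p, hp⟩ := (isCyclic_centralizer hz).exists_generator
  refine ⟨p, fun x hx => ?_⟩
  obtain ⟨k, hk⟩ := Subgroup.mem_zpowers_iff.1
    (hp ⟨x, Subgroup.mem_centralizer_singleton_iff.2 hx.eq.symm⟩)
  exact ⟨k, congrArg Subtype.val hk⟩

end IsFreeGroup

theorem stmt_7 (α : Type) (u₁ u₂ : FreeGroup α) (hu₁ : u₁ ≠ 1) (hu₂ : u₂ ≠ 1) :
    (∃ (g w : FreeGroup α), (∃ k : ℤ, u₁ = w ^ k) ∧ (∃ l : ℤ, u₂ = g * w ^ l * g⁻¹)) ↔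
    (∃ (a b : ℤ) (g : FreeGroup α), a ≠ 0 ∧ b ≠ 0 ∧ g * u₁ ^ a * g⁻¹ = u₂ ^ b) := by
  constructor
  · rintro ⟨g, w, ⟨k, rfl⟩, ⟨l, rfl⟩⟩
    refine ⟨l, k, g, ?_, ?_, ?_⟩
    · rintro rfl
      simp at hu₂
    · rintro rfl
      simp at hu₁
    · rw [conj_zpow, ← zpow_mul, ← zpow_mul, mul_comm]
  · rintro ⟨a, b, g, -, hb, h⟩
    have hz : u₂ ^ b ≠ 1 := (IsMulTorsionFree.zpow_eq_one_iff_left hb).not.2 hu₂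
    obtain ⟨p, hp⟩ := IsFreeGroup.exists_zpowers_of_commute hz
    obtain ⟨k, hk⟩ := Subgroup.mem_zpowers_iff.1 <| hp (g * u₁ * g⁻¹) <| by
      rw [← h, ← conj_zpow]
      exact (Commute.refl _).zpow_left a
    obtain ⟨l, hl⟩ := Subgroup.mem_zpowers_iff.1 <| hp u₂ ((Commute.refl u₂).zpow_left b)
    have hw (n : ℤ) : (g⁻¹ * p * g) ^ n = g⁻¹ * p ^ n * g := by
      simpa using conj_zpow (a := g⁻¹) (b := p) (i := n)
    refine ⟨g, g⁻¹ * p * g, ⟨k, ?_⟩, ⟨l, ?_⟩⟩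
    · rw [hw, hk]
      group
    · rw [hw, hl]
      group
end
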